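/- arXiv:1309.5636 — 2 statements merged into one kernel-verified Lean document; each statement's English description precedes it below -/
import Mathlib

section
/- If f : (0,∞) → (0,∞) is measurable with ∫₀^∞ f(x) dx < ∞, then ∫₀^∞ exp((1/x) ∫₀^x ln f(t) dt) dx ≤ e · ∫₀^∞ f(x) dx. -/
/-!
Since `log f(t) = log (t f(t)) - log t` and `∫₀ˣ log t dt = x log x - x`, Jensen's inequality for
`exp` on `(0, x]` (the integral AM–GM inequality) gives `geomMean f x ≤ (e / x²) ∫₀ˣ t f(t) dt`.
Integrating in `x` and exchanging the order of integration, `∫ₜ^∞ x⁻² dx = 1 / t` turns the right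
side into `e ∫₀^∞ f`.

If `log ∘ f` is not integrable on some `(0, b]`, its Bochner integral is the junk value `0` on
every `(0, x]` with `x ≥ b`, so `geomMean f = 1` on `(b, ∞)`; then it is not integrable and the left
side is `0` as well.
-/

open MeasureTheory Set Real
open scoped ENNReal

noncomputable def geomMean (f : ℝ → ℝ) (x : ℝ) : ℝ :=
  exp ((1 / x) * ∫ t in Ioc 0 x, log (f t))

theorem integrableOn_log_Ioc (a b : ℝ) : IntegrableOn log (Ioc a b) := by
  rcases le_total a b with hab | hab
  · exact (intervalIntegral.intervalIntegrable_log' (a := a) (b := b)).1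
  · simp [Ioc_eq_empty_of_le hab]

theorem setIntegral_log_Ioc_zero {b : ℝ} (hb : 0 ≤ b) :
    ∫ t in Ioc 0 b, log t = b * log b - b := by
  rw [← intervalIntegral.integral_of_le hb, integral_log]
  simp

theorem exp_average_log_le {α : Type*} [MeasurableSpace α] {μ : Measure α} [IsFiniteMeasure μ]
    [NeZero μ] {g : α → ℝ} (hg : ∀ᵐ a ∂μ, 0 < g a) (hgi : Integrable g μ)
    (hlog : Integrable (fun a => log (g a)) μ) :
    exp (⨍ a, log (g a) ∂μ) ≤ ⨍ a, g a ∂μ := by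
  have hexp : (fun a => exp (log (g a))) =ᵐ[μ] g := hg.mono fun a ha => exp_log ha
  calc exp (⨍ a, log (g a) ∂μ) ≤ ⨍ a, exp (log (g a)) ∂μ :=
        convexOn_exp.map_average_le continuousOn_exp isClosed_univ (by simp) hlog
          (hgi.congr hexp.symm)
    _ = ⨍ a, g a ∂μ := average_congr hexp

theorem MeasureTheory.IntegrableOn.id_mul_Ioc {f : ℝ → ℝ} {a b : ℝ}
    (hf : IntegrableOn f (Ioc a b)) : IntegrableOn (fun t => t * f t) (Ioc a b) :=
  hf.continuousOn_mul_of_subset continuousOn_id isCompact_Icc measurableSet_Ioc Ioc_subset_Icc_self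

theorem geomMean_le {f : ℝ → ℝ} {x : ℝ} (hx : 0 < x) (hf0 : ∀ t ∈ Ioc 0 x, 0 < f t)
    (hfi : IntegrableOn f (Ioc 0 x)) (hlog : IntegrableOn (fun t => log (f t)) (Ioc 0 x)) :
    geomMean f x ≤ exp 1 / x ^ 2 * ∫ t in Ioc 0 x, t * f t := by
  have : IsFiniteMeasure (volume.restrict (Ioc 0 x)) :=
    isFiniteMeasure_restrict.2 measure_Ioc_lt_top.ne
  have : NeZero (volume.restrict (Ioc 0 x)) := ⟨by simp [hx]⟩
  have hlog_mul : ∀ t ∈ Ioc 0 x, log (t * f t) = log t + log (f t) := fun t ht =>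
    log_mul ht.1.ne' (hf0 t ht).ne'
  have hlogi : IntegrableOn (fun t => log (t * f t)) (Ioc 0 x) :=
    ((integrableOn_log_Ioc 0 x).add hlog).congr_fun (fun t ht => (hlog_mul t ht).symm)
      measurableSet_Ioc
  have havg : ⨍ t in Ioc 0 x, log (t * f t) =
      (1 / x) * (∫ t in Ioc 0 x, log (f t)) + log x - 1 := by
    rw [setAverage_eq, setIntegral_congr_fun measurableSet_Ioc hlog_mul,
      integral_add (integrableOn_log_Ioc 0 x) hlog, setIntegral_log_Ioc_zero hx.le,
      Real.volume_real_Ioc_of_le hx.le, smul_eq_mul]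
    field_simp [hx.ne']
    ring
  have hjensen := exp_average_log_le (μ := volume.restrict (Ioc 0 x))
    ((ae_restrict_iff' measurableSet_Ioc).2 (ae_of_all _ fun t ht => mul_pos ht.1 (hf0 t ht)))
    hfi.id_mul_Ioc hlogi
  rw [havg, setAverage_eq, Real.volume_real_Ioc_of_le hx.le, sub_zero, smul_eq_mul, exp_sub,
    exp_add, exp_log hx] at hjensen
  calc geomMean f x = exp ((1 / x) * (∫ t in Ioc 0 x, log (f t))) * x / exp 1 * (exp 1 / x) := by
        unfold geomMean
        field_simp
    _ ≤ x⁻¹ * (∫ t in Ioc 0 x, t * f t) * (exp 1 / x) := by gcongr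
    _ = exp 1 / x ^ 2 * ∫ t in Ioc 0 x, t * f t := by field_simp

theorem lintegral_Ici_inv_sq {t : ℝ} (ht : 0 < t) :
    ∫⁻ x in Ici t, ENNReal.ofReal (x ^ 2)⁻¹ = ENNReal.ofReal t⁻¹ := by
  have hrpow : EqOn (fun x : ℝ => x ^ (-2 : ℝ)) (fun x => (x ^ 2)⁻¹) (Ioi t) := fun x hx => by
    simp [rpow_neg (ht.trans hx).le]
  have hint : IntegrableOn (fun x : ℝ => (x ^ 2)⁻¹) (Ioi t) :=
    (integrableOn_Ioi_rpow_of_lt (by norm_num) ht).congr_fun hrpow measurableSet_Ioi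
  rw [← restrict_Ioi_eq_restrict_Ici, ← ofReal_integral_eq_lintegral_ofReal hint
    (ae_of_all _ fun x => by positivity), ← setIntegral_congr_fun measurableSet_Ioi hrpow,
    integral_Ioi_rpow_of_lt (by norm_num) ht]
  norm_num [rpow_neg_one]

theorem lintegral_Ioi_inv_sq_mul_lintegral_Ioc {g : ℝ → ℝ≥0∞} (hg : Measurable g) :
    ∫⁻ x in Ioi 0, ENNReal.ofReal (x ^ 2)⁻¹ * ∫⁻ t in Ioc 0 x, g t =
      ∫⁻ t in Ioi 0, ENNReal.ofReal t⁻¹ * g t := by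
  set K : ℝ → ℝ → ℝ≥0∞ := fun x t => if t ≤ x then ENNReal.ofReal (x ^ 2)⁻¹ * g t else 0
  have hK : Measurable (Function.uncurry K) :=
    Measurable.ite (measurableSet_le measurable_snd measurable_fst)
      ((ENNReal.measurable_ofReal.comp (measurable_fst.pow_const 2).inv).mul
        (hg.comp measurable_snd)) measurable_const
  have hinner : ∀ x, ∫⁻ t in Ioi 0, K x t =
      ENNReal.ofReal (x ^ 2)⁻¹ * ∫⁻ t in Ioc 0 x, g t := by
    intro x
    rw [← lintegral_const_mul' _ _ ENNReal.ofReal_ne_top, ← Ioi_inter_Iic, inter_comm,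
      ← Measure.restrict_restrict measurableSet_Iic, ← lintegral_indicator measurableSet_Iic]
    simp only [K, indicator_apply, mem_Iic]
  have houter : ∀ t ∈ Ioi (0 : ℝ), ∫⁻ x in Ioi 0, K x t = ENNReal.ofReal t⁻¹ * g t := by
    intro t ht
    rw [← lintegral_Ici_inv_sq ht, ← lintegral_mul_const _ (by fun_prop),
      ← inter_eq_left.2 (Ici_subset_Ioi.2 (mem_Ioi.1 ht)),
      ← Measure.restrict_restrict measurableSet_Ici, ← lintegral_indicator measurableSet_Ici]
    simp only [K, indicator_apply, mem_Ici]
  calc ∫⁻ x in Ioi 0, ENNReal.ofReal (x ^ 2)⁻¹ * ∫⁻ t in Ioc 0 x, g t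
      = ∫⁻ x in Ioi 0, ∫⁻ t in Ioi 0, K x t := by simp only [hinner]
    _ = ∫⁻ t in Ioi 0, ∫⁻ x in Ioi 0, K x t := lintegral_lintegral_swap hK.aemeasurable
    _ = ∫⁻ t in Ioi 0, ENNReal.ofReal t⁻¹ * g t :=
        setLIntegral_congr_fun measurableSet_Ioi houter

theorem lintegral_geomMean_le {f : ℝ → ℝ} (hf : Measurable f)
    (hf0 : ∀ x ∈ Ioi (0 : ℝ), 0 < f x) (hfi : IntegrableOn f (Ioi 0))
    (hlog : ∀ x > 0, IntegrableOn (fun t => log (f t)) (Ioc 0 x)) :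
    ∫⁻ x in Ioi 0, ENNReal.ofReal (geomMean f x) ≤
      ENNReal.ofReal (exp 1) * ∫⁻ t in Ioi 0, ENNReal.ofReal (f t) :=
  calc ∫⁻ x in Ioi 0, ENNReal.ofReal (geomMean f x)
      ≤ ∫⁻ x in Ioi 0, ENNReal.ofReal (exp 1) *
          (ENNReal.ofReal (x ^ 2)⁻¹ * ∫⁻ t in Ioc 0 x, ENNReal.ofReal (t * f t)) := by
        refine setLIntegral_mono' measurableSet_Ioi fun x (hx : 0 < x) => ?_
        have hfx : IntegrableOn f (Ioc 0 x) := hfi.mono_set Ioc_subset_Ioi_self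
        rw [← ofReal_integral_eq_lintegral_ofReal hfx.id_mul_Ioc
            ((ae_restrict_iff' measurableSet_Ioc).2 (ae_of_all _ fun t ht =>
              (mul_pos ht.1 (hf0 t ht.1)).le)),
          ← ENNReal.ofReal_mul (by positivity), ← ENNReal.ofReal_mul (exp_pos 1).le, ← mul_assoc,
          ← div_eq_mul_inv]
        exact ENNReal.ofReal_le_ofReal (geomMean_le hx (fun t ht => hf0 t ht.1) hfx (hlog x hx))
    _ = ENNReal.ofReal (exp 1) *
          ∫⁻ t in Ioi 0, ENNReal.ofReal t⁻¹ * ENNReal.ofReal (t * f t) := by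
        rw [lintegral_const_mul' _ _ ENNReal.ofReal_ne_top,
          lintegral_Ioi_inv_sq_mul_lintegral_Ioc (by fun_prop)]
    _ = ENNReal.ofReal (exp 1) * ∫⁻ t in Ioi 0, ENNReal.ofReal (f t) := by
        congr 1
        refine setLIntegral_congr_fun measurableSet_Ioi fun t (ht : 0 < t) => ?_
        rw [← ENNReal.ofReal_mul (inv_nonneg.2 ht.le), inv_mul_cancel_left₀ ht.ne']

theorem not_integrableOn_geomMean {f : ℝ → ℝ} {b : ℝ} (hb : 0 < b)
    (hlog : ¬ IntegrableOn (fun t => log (f t)) (Ioc 0 b)) :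
    ¬ IntegrableOn (geomMean f) (Ioi 0) := by
  have hone : EqOn (geomMean f) 1 (Ioi b) := fun x (hx : b < x) => by
    have : ¬ IntegrableOn (fun t => log (f t)) (Ioc 0 x) :=
      fun h => hlog (h.mono_set (Ioc_subset_Ioc_right hx.le))
    simp [geomMean, integral_undef this]
  intro h
  have := (h.mono_set (Ioi_subset_Ioi hb.le)).congr_fun hone measurableSet_Ioi
  simp [Pi.one_def, integrableOn_const_iff] at this

/-- Pólya–Knopp inequality. -/
theorem polya_knopp (f : ℝ → ℝ) (hf : Measurable f)
    (hf0 : ∀ x ∈ Ioi (0:ℝ), 0 < f x) (hfi : IntegrableOn f (Ioi 0)) :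
    ∫ x in Ioi (0:ℝ), Real.exp ((1/x) * ∫ t in Ioc (0:ℝ) x, Real.log (f t)) ≤
      Real.exp 1 * ∫ x in Ioi (0:ℝ), f x := by
  change ∫ x in Ioi 0, geomMean f x ≤ _
  have hf_nonneg : 0 ≤ᵐ[volume.restrict (Ioi 0)] f :=
    (ae_restrict_iff' measurableSet_Ioi).2 (ae_of_all _ fun x hx => (hf0 x hx).le)
  have hrhs : 0 ≤ exp 1 * ∫ x in Ioi 0, f x :=
    mul_nonneg (exp_pos 1).le (integral_nonneg_of_ae hf_nonneg)
  by_cases hlog : ∀ x > 0, IntegrableOn (fun t => log (f t)) (Ioc 0 x)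
  · have hbound := lintegral_geomMean_le hf hf0 hfi hlog
    rw [← ofReal_integral_eq_lintegral_ofReal hfi hf_nonneg,
      ← ENNReal.ofReal_mul (exp_pos 1).le] at hbound
    calc ∫ x in Ioi 0, geomMean f x ≤ ‖∫ x in Ioi 0, geomMean f x‖ := le_norm_self _
      _ ≤ (∫⁻ x in Ioi 0, ENNReal.ofReal ‖geomMean f x‖).toReal :=
          norm_integral_le_lintegral_norm _
      _ ≤ exp 1 * ∫ x in Ioi 0, f x := by
          refine ENNReal.toReal_le_of_le_ofReal hrhs ?_
          simpa only [Real.norm_eq_abs, geomMean, abs_exp] using hbound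
  · obtain ⟨b, hb, hlogb⟩ := not_forall₂.1 hlog
    rwa [integral_undef (not_integrableOn_geomMean hb hlogb)]
end

section
/- Let 0 < p, q < ∞, let u, v be weights on (0,∞), f positive on (0,∞), g real continuous strictly monotone, and let w be strictly positive on (0,∞) with W(x) = ∫₀^x w(s) ds satisfying W(+∞) = +∞. Then the inequality (∫₀^∞ u(x)([M^g_w f](x))^q dx)^{1/q} ≤ C (∫₀^∞ v(x) f(x)^p dx)^{1/p} holds for all admissible f if and only if (∫₀^∞ U(x)([M^g h](x))^q dx)^{1/q} ≤ C (∫₀^∞ V(x) h(x)^p dx)^{1/p} holds for all admissible h, with the same constant C, where U(x) = u(W⁻¹(x))/W'(W⁻¹(x)) and V(x) = v(W⁻¹(x))/W'(W⁻¹(x)). -/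
/-!
The substitution `y = W x`, with `W x = ∫₀ˣ w` a `C¹` increasing bijection of `(0, ∞)` and
`W' = w`, turns `∫₀^{W x} g ∘ h` into `∫₀ˣ w · g ∘ (h ∘ W)`, hence `[M^g h](W x) = [M^g_w f](x)`
for `f = h ∘ W`, and turns `∫₀^∞ Φ(y) dy` into `∫₀^∞ w(x) Φ(W x) dx`, the Jacobian `w` being
absorbed by the weights `U, V`. So both sides of the two inequalities agree for `f = h ∘ W`, and
every admissible `f` is of this form with `h = f ∘ W⁻¹`.
-/

open MeasureTheory Set

noncomputable def primitive (w : ℝ → ℝ) (x : ℝ) : ℝ := ∫ s in Ioc (0:ℝ) x, w s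

/-- `[M^g_w f](x)`, with `ginv` in the role of `g⁻¹`. -/
noncomputable def weightedQuasiMean (w g ginv f : ℝ → ℝ) (x : ℝ) : ℝ :=
  ginv ((∫ t in Ioc (0:ℝ) x, w t * g (f t)) / primitive w x)

/-- `[M^g h](x)`, with `ginv` in the role of `g⁻¹`. -/
noncomputable def quasiMean (g ginv h : ℝ → ℝ) (x : ℝ) : ℝ :=
  ginv ((1 / x) * ∫ t in Ioc (0:ℝ) x, g (h t))

theorem setIntegral_image_eq_setIntegral_mul_comp {W w : ℝ → ℝ} {s : Set ℝ}
    (hs : MeasurableSet s) (hW : ∀ x ∈ s, HasDerivWithinAt W (w x) s x) (hinj : InjOn W s)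
    (hw : ∀ x ∈ s, 0 ≤ w x) (F : ℝ → ℝ) :
    ∫ y in W '' s, F y = ∫ x in s, w x * F (W x) := by
  rw [integral_image_eq_integral_abs_deriv_smul hs hW hinj]
  exact setIntegral_congr_fun hs fun x hx => by rw [smul_eq_mul, abs_of_nonneg (hw x hx)]

theorem image_Ioc_zero_of_strictMonoOn {W : ℝ → ℝ} (hmono : StrictMonoOn W (Ioi 0))
    (hbij : BijOn W (Ioi 0) (Ioi 0)) {x : ℝ} (hx : 0 < x) : W '' Ioc 0 x = Ioc 0 (W x) := by
  refine Subset.antisymm ?_ fun y ⟨hy, hyx⟩ => ?_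
  · rintro _ ⟨t, ⟨ht, htx⟩, rfl⟩
    exact ⟨hbij.mapsTo ht, (hmono.le_iff_le ht hx).2 htx⟩
  · obtain ⟨t, ht, rfl⟩ := hbij.surjOn hy
    exact ⟨t, ⟨ht, (hmono.le_iff_le ht hx).1 hyx⟩, rfl⟩

theorem measurable_ite_pos_of_monotoneOn {φ : ℝ → ℝ} (hφ : MonotoneOn φ (Ioi 0))
    (hpos : ∀ y > 0, 0 < φ y) : Measurable fun y => if 0 < y then φ y else 0 := by
  refine Monotone.measurable fun a b hab => ?_
  by_cases hb : 0 < b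
  · by_cases ha : 0 < a
    · simpa only [if_pos ha, if_pos hb] using hφ ha hb hab
    · simpa only [if_neg ha, if_pos hb] using (hpos b hb).le
  · simp only [if_neg hb, if_neg fun ha : 0 < a => hb (ha.trans_le hab), le_refl]

theorem exists_measurable_eq_comp {W Winv f : ℝ → ℝ} (hmono : StrictMonoOn W (Ioi 0))
    (hW : MapsTo W (Ioi 0) (Ioi 0)) (hinv : InvOn Winv W (Ioi 0) (Ioi 0))
    (hWinv : MapsTo Winv (Ioi 0) (Ioi 0)) (hf : Measurable f) (hfpos : ∀ x > 0, 0 < f x) :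
    ∃ h : ℝ → ℝ, Measurable h ∧ (∀ y > 0, 0 < h y) ∧ ∀ x > 0, f x = h (W x) := by
  have hWinv_mono : MonotoneOn Winv (Ioi 0) := fun a ha b hb hab =>
    (hmono.le_iff_le (hWinv ha) (hWinv hb)).1 (by rwa [hinv.2 ha, hinv.2 hb])
  refine ⟨f ∘ fun y => if 0 < y then Winv y else 0,
    hf.comp (measurable_ite_pos_of_monotoneOn hWinv_mono fun y hy => hWinv hy), fun y hy => ?_,
    fun x hx => ?_⟩
  · simpa only [Function.comp_apply, if_pos hy] using hfpos _ (hWinv hy)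
  · have hWx : 0 < W x := hW hx
    simp only [Function.comp_apply, if_pos hWx, hinv.1 hx]

namespace primitive

variable {w : ℝ → ℝ}

theorem integrableOn_Ioc_of_injOn (hinj : InjOn (primitive w) (Ioi 0)) (x : ℝ) :
    IntegrableOn w (Ioc 0 x) := by
  rcases le_or_gt x 0 with hx | hx
  · rw [Ioc_eq_empty hx.not_gt]
    exact integrableOn_empty
  by_contra hni
  have hzero : ∀ y, x ≤ y → primitive w y = 0 := fun y hy =>
    integral_undef fun hI => hni (IntegrableOn.mono_set hI (Ioc_subset_Ioc_right hy))
  have := hinj hx (by simp only [mem_Ioi]; linarith)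
    ((hzero x le_rfl).trans (hzero (x + 1) (by linarith)).symm)
  linarith

theorem monotone (hw : ∀ x > 0, 0 ≤ w x) (hint : ∀ x, IntegrableOn w (Ioc 0 x)) :
    Monotone (primitive w) := fun _ y hxy =>
  setIntegral_mono_set (hint y)
    ((ae_restrict_iff' measurableSet_Ioc).2 (.of_forall fun t ht => hw t ht.1))
    (Ioc_subset_Ioc_right hxy).eventuallyLE

theorem pos (hw : ∀ x > 0, 0 < w x) {x : ℝ} (hint : IntegrableOn w (Ioc 0 x)) (hx : 0 < x) :
    0 < primitive w x := by
  rw [primitive, ← intervalIntegral.integral_of_le hx.le]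
  exact intervalIntegral.intervalIntegral_pos_of_pos_on
    ((intervalIntegrable_iff_integrableOn_Ioc_of_le hx.le).2 hint) (fun t ht => hw t ht.1) hx

theorem hasDerivAt (hwc : ContinuousOn w (Ioi 0)) {x : ℝ} (hint : IntegrableOn w (Ioc 0 x))
    (hx : 0 < x) : HasDerivAt (primitive w) (w x) x := by
  have hderiv : HasDerivAt (fun y => ∫ t in (0:ℝ)..y, w t) (w x) x :=
    intervalIntegral.integral_hasDerivAt_right
      ((intervalIntegrable_iff_integrableOn_Ioc_of_le hx.le).2 hint)
      ⟨Ioi 0, Ioi_mem_nhds hx, hwc.aestronglyMeasurable measurableSet_Ioi⟩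
      (hwc.continuousAt (Ioi_mem_nhds hx))
  refine hderiv.congr_of_eventuallyEq ?_
  filter_upwards [Ioi_mem_nhds hx] with y hy
  exact (intervalIntegral.integral_of_le (le_of_lt hy)).symm

theorem strictMonoOn (hw : ∀ x > 0, 0 ≤ w x) (hint : ∀ x, IntegrableOn w (Ioc 0 x))
    (hinj : InjOn (primitive w) (Ioi 0)) : StrictMonoOn (primitive w) (Ioi 0) :=
  ((monotone hw hint).monotoneOn _).strictMonoOn_of_injOn hinj

theorem setIntegral_image (hw : ∀ x > 0, 0 < w x) (hwc : ContinuousOn w (Ioi 0))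
    (hint : ∀ x, IntegrableOn w (Ioc 0 x)) {s : Set ℝ} (hs : MeasurableSet s) (hs0 : s ⊆ Ioi 0)
    (hinj : InjOn (primitive w) s) (F : ℝ → ℝ) :
    ∫ y in primitive w '' s, F y = ∫ x in s, w x * F (primitive w x) :=
  setIntegral_image_eq_setIntegral_mul_comp hs
    (fun x hx => (hasDerivAt hwc (hint x) (hs0 hx)).hasDerivWithinAt) hinj
    (fun x hx => (hw x (hs0 hx)).le) F

theorem integral_Ioi (hw : ∀ x > 0, 0 < w x) (hwc : ContinuousOn w (Ioi 0))
    (hbij : BijOn (primitive w) (Ioi 0) (Ioi 0)) (F : ℝ → ℝ) :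
    ∫ y in Ioi 0, F y = ∫ x in Ioi 0, w x * F (primitive w x) := by
  rw [← setIntegral_image hw hwc (integrableOn_Ioc_of_injOn hbij.injOn) measurableSet_Ioi
    subset_rfl hbij.injOn, hbij.image_eq]

theorem integral_Ioc (hw : ∀ x > 0, 0 < w x) (hwc : ContinuousOn w (Ioi 0))
    (hbij : BijOn (primitive w) (Ioi 0) (Ioi 0)) {x : ℝ} (hx : 0 < x) (F : ℝ → ℝ) :
    ∫ y in Ioc 0 (primitive w x), F y = ∫ t in Ioc 0 x, w t * F (primitive w t) := by
  have hint := integrableOn_Ioc_of_injOn hbij.injOn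
  rw [← image_Ioc_zero_of_strictMonoOn
      (strictMonoOn (fun x hx => (hw x hx).le) hint hbij.injOn) hbij hx,
    setIntegral_image hw hwc hint measurableSet_Ioc Ioc_subset_Ioi_self
      (hbij.injOn.mono Ioc_subset_Ioi_self)]

theorem integral_div_comp_leftInvOn (hw : ∀ x > 0, 0 < w x) (hwc : ContinuousOn w (Ioi 0))
    (hbij : BijOn (primitive w) (Ioi 0) (Ioi 0)) {Winv : ℝ → ℝ}
    (hleft : LeftInvOn Winv (primitive w) (Ioi 0)) (φ Ψ : ℝ → ℝ) :
    ∫ y in Ioi 0, φ (Winv y) / w (Winv y) * Ψ y = ∫ x in Ioi 0, φ x * Ψ (primitive w x) := by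
  rw [integral_Ioi hw hwc hbij]
  refine setIntegral_congr_fun measurableSet_Ioi fun x hx => ?_
  simp only [hleft hx]
  field_simp [(hw x hx).ne']

theorem quasiMean_eq_weightedQuasiMean (hw : ∀ x > 0, 0 < w x) (hwc : ContinuousOn w (Ioi 0))
    (hbij : BijOn (primitive w) (Ioi 0) (Ioi 0)) {g ginv f h : ℝ → ℝ}
    (hfh : ∀ x > 0, f x = h (primitive w x)) {x : ℝ} (hx : 0 < x) :
    quasiMean g ginv h (primitive w x) = weightedQuasiMean w g ginv f x := by
  rw [quasiMean, weightedQuasiMean, integral_Ioc hw hwc hbij hx, one_div_mul_eq_div]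
  congr 2
  exact setIntegral_congr_fun measurableSet_Ioc fun t ht => by rw [hfh t ht.1]

end primitive

theorem weightedQuasiMean_inequality_iff {w g ginv Winv u v f h : ℝ → ℝ} (p q C : ℝ)
    (hw : ∀ x > 0, 0 < w x) (hwc : ContinuousOn w (Ioi 0))
    (hbij : BijOn (primitive w) (Ioi 0) (Ioi 0)) (hleft : LeftInvOn Winv (primitive w) (Ioi 0))
    (hfh : ∀ x > 0, f x = h (primitive w x)) :
    (∫ x in Ioi 0, u x * weightedQuasiMean w g ginv f x ^ q) ^ (1/q) ≤
        C * (∫ x in Ioi 0, v x * f x ^ p) ^ (1/p) ↔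
      (∫ x in Ioi 0, u (Winv x) / w (Winv x) * quasiMean g ginv h x ^ q) ^ (1/q) ≤
        C * (∫ x in Ioi 0, v (Winv x) / w (Winv x) * h x ^ p) ^ (1/p) := by
  have hu : ∫ x in Ioi 0, u x * quasiMean g ginv h (primitive w x) ^ q =
      ∫ x in Ioi 0, u x * weightedQuasiMean w g ginv f x ^ q :=
    setIntegral_congr_fun measurableSet_Ioi fun x hx => by
      rw [primitive.quasiMean_eq_weightedQuasiMean hw hwc hbij hfh hx]
  have hv : ∫ x in Ioi 0, v x * h (primitive w x) ^ p = ∫ x in Ioi 0, v x * f x ^ p :=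
    setIntegral_congr_fun measurableSet_Ioi fun x hx => by rw [hfh x hx]
  rw [primitive.integral_div_comp_leftInvOn hw hwc hbij hleft u (quasiMean g ginv h · ^ q),
    primitive.integral_div_comp_leftInvOn hw hwc hbij hleft v (h · ^ p), hu, hv]

theorem reduction_lemma_general (p q C : ℝ)
    (u v w g ginv Winv : ℝ → ℝ)
    (hw : ∀ x > 0, 0 < w x) (hwc : ContinuousOn w (Ioi 0))
    (hWinv : ∀ x > 0, Winv (∫ s in Ioc (0:ℝ) x, w s) = x ∧
      (∫ s in Ioc (0:ℝ) (Winv x), w s) = x ∧ 0 < Winv x) :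
    (∀ f : ℝ → ℝ, Measurable f → (∀ x > 0, 0 < f x) →
      (∫ x in Ioi (0:ℝ), u x *
          (ginv ((∫ t in Ioc (0:ℝ) x, w t * g (f t)) /
            ∫ s in Ioc (0:ℝ) x, w s)) ^ q) ^ (1/q) ≤
        C * (∫ x in Ioi (0:ℝ), v x * f x ^ p) ^ (1/p)) ↔
    (∀ h : ℝ → ℝ, Measurable h → (∀ x > 0, 0 < h x) →
      (∫ x in Ioi (0:ℝ), (u (Winv x) / w (Winv x)) *
          (ginv ((1/x) * ∫ t in Ioc (0:ℝ) x, g (h t))) ^ q) ^ (1/q) ≤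
        C * (∫ x in Ioi (0:ℝ), (v (Winv x) / w (Winv x)) * h x ^ p) ^ (1/p)) := by
  have hinv : InvOn Winv (primitive w) (Ioi 0) (Ioi 0) :=
    ⟨fun x hx => (hWinv x hx).1, fun y hy => (hWinv y hy).2.1⟩
  have hWinv_maps : MapsTo Winv (Ioi 0) (Ioi 0) := fun y hy => (hWinv y hy).2.2
  have hint := primitive.integrableOn_Ioc_of_injOn hinv.1.injOn
  have hbij : BijOn (primitive w) (Ioi 0) (Ioi 0) :=
    hinv.bijOn (fun x hx => primitive.pos hw (hint x) hx) hWinv_maps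
  constructor
  · intro H h hh hhpos
    refine (weightedQuasiMean_inequality_iff p q C hw hwc hbij hinv.1
      (f := h ∘ primitive w) fun _ _ => rfl).1 (H _ ?_ fun x hx => hhpos _ (hbij.mapsTo hx))
    exact hh.comp (primitive.monotone (fun x hx => (hw x hx).le) hint).measurable
  · intro H f hf hfpos
    obtain ⟨h, hh, hhpos, hfh⟩ := exists_measurable_eq_comp
      (primitive.strictMonoOn (fun x hx => (hw x hx).le) hint hinv.1.injOn) hbij.mapsTo hinv
      hWinv_maps hf hfpos
    exact (weightedQuasiMean_inequality_iff p q C hw hwc hbij hinv.1 hfh).2 (H h hh hhpos)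

/-- Reduction lemma: the weighted strong type `(p,q)` inequality for the generalized
weighted mean operator `M^g_w` is equivalent to the corresponding inequality for the
non-weighted operator `M^g` with transformed weights `U, V`. -/
theorem reduction_lemma (p q C : ℝ) (hp : 0 < p) (hq : 0 < q) (hC : 0 < C)
    (u v w g ginv Winv : ℝ → ℝ)
    (hu : ∀ x, 0 ≤ u x) (hv : ∀ x, 0 ≤ v x)
    (hw : ∀ x > 0, 0 < w x) (hwc : ContinuousOn w (Ioi 0))
    (hWtop : Filter.Tendsto (fun x => ∫ s in Ioc (0:ℝ) x, w s) Filter.atTop Filter.atTop)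
    (hWinv : ∀ x > 0, Winv (∫ s in Ioc (0:ℝ) x, w s) = x ∧
      (∫ s in Ioc (0:ℝ) (Winv x), w s) = x ∧ 0 < Winv x)
    (hgm : StrictMono g ∨ StrictAnti g) (hgc : Continuous g)
    (hinv : Function.LeftInverse ginv g) :
    (∀ f : ℝ → ℝ, Measurable f → (∀ x > 0, 0 < f x) →
      (∫ x in Ioi (0:ℝ), u x *
          (ginv ((∫ t in Ioc (0:ℝ) x, w t * g (f t)) /
            ∫ s in Ioc (0:ℝ) x, w s)) ^ q) ^ (1/q) ≤
        C * (∫ x in Ioi (0:ℝ), v x * f x ^ p) ^ (1/p)) ↔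
    (∀ h : ℝ → ℝ, Measurable h → (∀ x > 0, 0 < h x) →
      (∫ x in Ioi (0:ℝ), (u (Winv x) / w (Winv x)) *
          (ginv ((1/x) * ∫ t in Ioc (0:ℝ) x, g (h t))) ^ q) ^ (1/q) ≤
        C * (∫ x in Ioi (0:ℝ), (v (Winv x) / w (Winv x)) * h x ^ p) ^ (1/p)) :=
  reduction_lemma_general p q C u v w g ginv Winv hw hwc hWinv
end
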